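/- Let n ≥ 1 and let V be a unitary 2^n × 2^n complex matrix indexed by bit strings x : Fin n → Bool that commutes with the global bit-flip matrix X^{⊗n}. Then for every j : Fin n, ⟨V|+^n⟩, Z_j V|+^n⟩⟩ = 0. -/

import Mathlib

open Matrix

/-- The single-qubit Pauli-Z operator on qubit `j`: diagonal with entry `(-1)^{x_j}`. -/
noncomputable def Zop {n : ℕ} (j : Fin n) : Matrix (Fin n → Bool) (Fin n → Bool) ℂ :=
  Matrix.diagonal (fun x => if x j then -1 else 1)

/-- The global bit-flip operator `X^{⊗n}`: the permutation matrix of bitwise negation. -/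
noncomputable def XallF (n : ℕ) : Matrix (Fin n → Bool) (Fin n → Bool) ℂ :=
  Matrix.of (fun x y => if y = (fun i => ! x i) then 1 else 0)

/-- The state `|+^n⟩`: all entries equal to `2^{-n/2}`. -/
noncomputable def plusF (n : ℕ) : (Fin n → Bool) → ℂ :=
  fun _ => ((1 / Real.sqrt (2 ^ n) : ℝ) : ℂ)

/-! `V|+^n⟩` is fixed by the Hermitian involution `X^{⊗n}`, while `Z_j` anticommutes with
`X^{⊗n}`, so `Z_j V|+^n⟩` lies in its `-1`-eigenspace. Eigenvectors of a Hermitian matrix for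
the eigenvalues `1` and `-1` are orthogonal. -/

theorem Matrix.IsHermitian.star_dotProduct_eq_zero_of_mulVec_eq_neg {R ι : Type*}
    [CommRing R] [StarRing R] [NoZeroDivisors R] [CharZero R] [Fintype ι]
    {A : Matrix ι ι R} (hA : A.IsHermitian) {u w : ι → R}
    (hu : A *ᵥ u = u) (hw : A *ᵥ w = -w) : star u ⬝ᵥ w = 0 := by
  have h : star u ⬝ᵥ (A *ᵥ w) = star u ⬝ᵥ w := by
    rw [dotProduct_mulVec, ← hA.eq, ← star_mulVec, hu]
  rwa [hw, dotProduct_neg, CharZero.neg_eq_self_iff] at h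

theorem Matrix.mulVec_mulVec_eq_of_mul_comm {R ι : Type*} [Semiring R] [Fintype ι]
    {A V : Matrix ι ι R} (hAV : V * A = A * V) {v : ι → R} (hv : A *ᵥ v = v) :
    A *ᵥ (V *ᵥ v) = V *ᵥ v := by
  rw [mulVec_mulVec, ← hAV, ← mulVec_mulVec, hv]

section BitFlip

variable {n : ℕ}

theorem XallF_mulVec (v : (Fin n → Bool) → ℂ) :
    XallF n *ᵥ v = fun x => v (fun i => !x i) := by
  funext x
  simp [XallF, mulVec, dotProduct]

theorem XallF_isHermitian : (XallF n).IsHermitian := by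
  ext x y
  have hflip : (x = fun i => !y i) ↔ (y = fun i => !x i) := by
    constructor <;> rintro rfl <;> simp
  simp only [XallF, conjTranspose_apply, of_apply, hflip]
  split_ifs <;> simp

theorem Zop_mulVec (j : Fin n) (v : (Fin n → Bool) → ℂ) :
    Zop j *ᵥ v = fun x => (if x j then -1 else 1) * v x := by
  funext x
  rw [Zop, mulVec_diagonal]

theorem XallF_mulVec_plusF : XallF n *ᵥ plusF n = plusF n := by
  rw [XallF_mulVec]
  rfl

theorem XallF_mulVec_Zop_mulVec (j : Fin n) (v : (Fin n → Bool) → ℂ) :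
    XallF n *ᵥ (Zop j *ᵥ v) = -(Zop j *ᵥ (XallF n *ᵥ v)) := by
  funext x
  cases h : x j <;> simp [XallF_mulVec, Zop_mulVec, h]

end BitFlip

theorem stmt4_general (n : ℕ)
    (V : Matrix (Fin n → Bool) (Fin n → Bool) ℂ)
    (hsym : V * XallF n = XallF n * V)
    (j : Fin n) :
    star (V.mulVec (plusF n)) ⬝ᵥ (Zop j).mulVec (V.mulVec (plusF n)) = 0 := by
  have hfix := mulVec_mulVec_eq_of_mul_comm hsym XallF_mulVec_plusF
  refine XallF_isHermitian.star_dotProduct_eq_zero_of_mulVec_eq_neg hfix ?_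
  rw [XallF_mulVec_Zop_mulVec, hfix]

theorem stmt4 (n : ℕ) (hn : 1 ≤ n)
    (V : Matrix (Fin n → Bool) (Fin n → Bool) ℂ)
    (hV : Vᴴ * V = 1 ∧ V * Vᴴ = 1)
    (hsym : V * XallF n = XallF n * V)
    (j : Fin n) :
    star (V.mulVec (plusF n)) ⬝ᵥ (Zop j).mulVec (V.mulVec (plusF n)) = 0 :=
  stmt4_general n V hsym j
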